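/- Let x, z ∈ ℝⁿ be nonzero, set ρ = ‖x‖/‖z‖, let φ be the angle between x and z, and let e = xxᵀ − zzᵀ ≠ 0. Define sin θ as the sine of the angle between e and the subspace {xyᵀ + yxᵀ : y ∈ ℝⁿ} in Frobenius norm (i.e., ‖e‖ sin θ = min_y ‖xyᵀ + yxᵀ − e‖_F). Then sin θ = sin²φ / √((ρ² − 1)² + 2ρ² sin²φ). -/

import Mathlib

/-!
Write `z = c x + w` with `c = ⟪x, z⟫ / ‖x‖²` and `w ⟂ x`, so that `‖w‖ = ‖z‖ sin φ`. Then
`x yᵀ + y xᵀ - e = x vᵀ + v xᵀ + w wᵀ` for `v = y + ((c² - 1) / 2) x + c w`, and `w wᵀ` is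
Frobenius-orthogonal to every `x vᵀ + v xᵀ`, since `⟨x vᵀ, w wᵀ⟩ = ⟪x, w⟫ ⟪v, w⟫ = 0`. By Pythagoras
the distance from `e` to the subspace is `‖w wᵀ‖ = ‖z‖² sin² φ`, attained at `v = 0`, while
`‖e‖² = ‖x‖⁴ - 2 ⟪x, z⟫² + ‖z‖⁴ = ‖z‖⁴ ((ρ² - 1)² + 2 ρ² sin² φ)`.
-/

/-- Frobenius norm of an n×n real matrix. -/
noncomputable def frobNorm {n : ℕ} (M : Matrix (Fin n) (Fin n) ℝ) : ℝ :=
  Real.sqrt (∑ i, ∑ j, (M i j) ^ 2)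

open scoped InnerProductSpace

section Outer

variable {ι κ : Type*}

/-- The outer product `a bᵀ`, flattened to a vector of `EuclideanSpace ℝ (ι × κ)`, whose norm is
the Frobenius norm of `a bᵀ`. -/
noncomputable def outer (a : EuclideanSpace ℝ ι) (b : EuclideanSpace ℝ κ) :
    EuclideanSpace ℝ (ι × κ) :=
  WithLp.toLp 2 fun p => a p.1 * b p.2

@[simp]
theorem outer_apply (a : EuclideanSpace ℝ ι) (b : EuclideanSpace ℝ κ) (p : ι × κ) :
    outer a b p = a p.1 * b p.2 := rfl

@[simp]
theorem outer_zero_left (b : EuclideanSpace ℝ κ) : outer (0 : EuclideanSpace ℝ ι) b = 0 := by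
  ext; simp

@[simp]
theorem outer_zero_right (a : EuclideanSpace ℝ ι) : outer a (0 : EuclideanSpace ℝ κ) = 0 := by
  ext; simp

theorem inner_outer_outer [Fintype ι] [Fintype κ] (a c : EuclideanSpace ℝ ι)
    (b d : EuclideanSpace ℝ κ) :
    ⟪outer a b, outer c d⟫_ℝ = ⟪a, c⟫_ℝ * ⟪b, d⟫_ℝ := by
  simp only [PiLp.inner_apply, outer_apply, RCLike.inner_apply, conj_trivial,
    Fintype.sum_prod_type, Finset.sum_mul_sum]
  exact Finset.sum_congr rfl fun _ _ => Finset.sum_congr rfl fun _ _ => by ring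

end Outer

section Symmetric

variable {ι : Type*}

theorem norm_outer_sub_outer_sq [Fintype ι] (x z : EuclideanSpace ℝ ι) :
    ‖outer x x - outer z z‖ ^ 2 = ‖x‖ ^ 4 - 2 * ⟪x, z⟫_ℝ ^ 2 + ‖z‖ ^ 4 := by
  rw [norm_sub_sq_real, ← real_inner_self_eq_norm_sq, ← real_inner_self_eq_norm_sq,
    inner_outer_outer, inner_outer_outer, inner_outer_outer, real_inner_self_eq_norm_sq,
    real_inner_self_eq_norm_sq]
  ring

theorem outer_symm_sub_eq {x z w : EuclideanSpace ℝ ι} {c : ℝ} (hz : z = c • x + w)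
    (y : EuclideanSpace ℝ ι) :
    outer x y + outer y x - (outer x x - outer z z) =
      outer x (y + ((c ^ 2 - 1) / 2) • x + c • w) + outer (y + ((c ^ 2 - 1) / 2) • x + c • w) x
        + outer w w := by
  subst hz
  ext p
  simp only [PiLp.add_apply, PiLp.sub_apply, PiLp.smul_apply, outer_apply, smul_eq_mul]
  ring

theorem norm_outer_symm_add_outer_sq [Fintype ι] {x w : EuclideanSpace ℝ ι} (h : ⟪x, w⟫_ℝ = 0)
    (v : EuclideanSpace ℝ ι) :
    ‖outer x v + outer v x + outer w w‖ ^ 2 = ‖outer x v + outer v x‖ ^ 2 + ‖w‖ ^ 4 := by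
  have horth : ⟪outer x v + outer v x, outer w w⟫_ℝ = 0 := by
    rw [inner_add_left, inner_outer_outer, inner_outer_outer, h]
    ring
  rw [norm_add_sq_real, horth, ← real_inner_self_eq_norm_sq (outer w w),
    inner_outer_outer, real_inner_self_eq_norm_sq]
  ring

theorem isLeast_norm_outer_symm_sub [Fintype ι] (x z : EuclideanSpace ℝ ι) :
    IsLeast (Set.range fun y => ‖outer x y + outer y x - (outer x x - outer z z)‖)
      (‖z - (⟪x, z⟫_ℝ / ‖x‖ ^ 2) • x‖ ^ 2) := by
  set c := ⟪x, z⟫_ℝ / ‖x‖ ^ 2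
  set w := z - c • x
  have hxw : ⟪x, w⟫_ℝ = 0 := by
    rcases eq_or_ne x 0 with rfl | hx
    · simp
    have : ‖x‖ ^ 2 ≠ 0 := by positivity
    rw [inner_sub_right, real_inner_smul_right, real_inner_self_eq_norm_sq]
    simp only [c]
    field_simp
    ring
  set v := fun y : EuclideanSpace ℝ ι => y + ((c ^ 2 - 1) / 2) • x + c • w
  have hval : ∀ y, ‖outer x y + outer y x - (outer x x - outer z z)‖ ^ 2 =
      ‖outer x (v y) + outer (v y) x‖ ^ 2 + ‖w‖ ^ 4 := fun y => by
    rw [outer_symm_sub_eq (add_sub_cancel (c • x) z).symm y, norm_outer_symm_add_outer_sq hxw]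
  refine ⟨⟨-(((c ^ 2 - 1) / 2) • x + c • w), ?_⟩, ?_⟩
  · refine (pow_left_inj₀ (norm_nonneg _) (by positivity) two_ne_zero).mp ?_
    rw [hval, ← pow_mul]
    simp [v]
  · rintro _ ⟨y, rfl⟩
    refine (pow_le_pow_iff_left₀ (by positivity) (norm_nonneg _) two_ne_zero).mp ?_
    rw [hval, ← pow_mul]
    exact le_add_of_nonneg_left (sq_nonneg _)

end Symmetric

theorem InnerProductGeometry.norm_sub_inner_smul_sq_eq_mul_sin_angle_sq {E : Type*}
    [NormedAddCommGroup E] [InnerProductSpace ℝ E] (x z : E) :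
    ‖z - (⟪x, z⟫_ℝ / ‖x‖ ^ 2) • x‖ ^ 2 = ‖z‖ ^ 2 * Real.sin (angle x z) ^ 2 := by
  rcases eq_or_ne x 0 with rfl | hx
  · simp
  have : ‖x‖ ≠ 0 := norm_ne_zero_iff.mpr hx
  rw [norm_sub_sq_real, real_inner_smul_right, norm_smul, Real.norm_eq_abs, mul_pow, sq_abs,
    real_inner_comm x z, Real.sin_sq, ← cos_angle_mul_norm_mul_norm]
  field_simp
  ring

theorem frobNorm_eq_norm {n : ℕ} {M : Matrix (Fin n) (Fin n) ℝ}
    {u : EuclideanSpace ℝ (Fin n × Fin n)} (h : ∀ i j, M i j = u (i, j)) :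
    frobNorm M = ‖u‖ := by
  simp [frobNorm, EuclideanSpace.norm_eq, Fintype.sum_prod_type, h]

theorem frobNorm_ne_zero {n : ℕ} {M : Matrix (Fin n) (Fin n) ℝ} (hM : M ≠ 0) :
    frobNorm M ≠ 0 := by
  rw [frobNorm_eq_norm (u := WithLp.toLp 2 fun p => M p.1 p.2) fun _ _ => rfl, norm_ne_zero_iff]
  contrapose! hM
  ext i j
  exact congrFun (congrArg WithLp.ofLp hM) (i, j)

theorem stmt8_general {n : ℕ} (x z : EuclideanSpace ℝ (Fin n))
    (hz : z ≠ 0)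
    (ρ : ℝ) (hρ : ρ = ‖x‖ / ‖z‖)
    (φ : ℝ) (hφ : φ = InnerProductGeometry.angle x z)
    (e : Matrix (Fin n) (Fin n) ℝ)
    (he : e = Matrix.of fun i j => x i * x j - z i * z j) (hene : e ≠ 0)
    (sinθ : ℝ)
    (hθ : IsLeast {t : ℝ | ∃ y : EuclideanSpace ℝ (Fin n),
        t = frobNorm (Matrix.of (fun i j => x i * y j + y i * x j) - e)}
      (frobNorm e * sinθ)) :
    sinθ = Real.sin φ ^ 2 /
      Real.sqrt ((ρ ^ 2 - 1) ^ 2 + 2 * ρ ^ 2 * Real.sin φ ^ 2) := by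
  have hres : ∀ y : EuclideanSpace ℝ (Fin n),
      frobNorm (Matrix.of (fun i j => x i * y j + y i * x j) - e) =
        ‖outer x y + outer y x - (outer x x - outer z z)‖ :=
    fun y => frobNorm_eq_norm fun i j => by simp [he]
  have hmin : frobNorm e * sinθ = ‖z‖ ^ 2 * Real.sin φ ^ 2 := by
    refine hθ.unique ?_
    rw [hφ, ← InnerProductGeometry.norm_sub_inner_smul_sq_eq_mul_sin_angle_sq]
    simpa only [← hres, Set.range, eq_comm] using isLeast_norm_outer_symm_sub x z
  have hnorm_e : frobNorm e = ‖z‖ ^ 2 * √((ρ ^ 2 - 1) ^ 2 + 2 * ρ ^ 2 * Real.sin φ ^ 2) := by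
    have hz' : ‖z‖ ≠ 0 := norm_ne_zero_iff.mpr hz
    rw [frobNorm_eq_norm (u := outer x x - outer z z) fun i j => by simp [he],
      ← Real.sqrt_sq (norm_nonneg _), ← Real.sqrt_sq (sq_nonneg ‖z‖),
      ← Real.sqrt_mul (by positivity)]
    congr 1
    rw [norm_outer_sub_outer_sq, hρ, hφ, Real.sin_sq,
      ← InnerProductGeometry.cos_angle_mul_norm_mul_norm]
    field_simp
    ring
  have hD : √((ρ ^ 2 - 1) ^ 2 + 2 * ρ ^ 2 * Real.sin φ ^ 2) ≠ 0 :=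
    right_ne_zero_of_mul (hnorm_e ▸ frobNorm_ne_zero hene)
  rw [eq_div_iff hD]
  apply mul_left_cancel₀ (pow_ne_zero 2 (norm_ne_zero_iff.mpr hz))
  rw [← hmin, hnorm_e]
  ring

theorem stmt8 {n : ℕ} (x z : EuclideanSpace ℝ (Fin n))
    (hx : x ≠ 0) (hz : z ≠ 0)
    (ρ : ℝ) (hρ : ρ = ‖x‖ / ‖z‖)
    (φ : ℝ) (hφ : φ = InnerProductGeometry.angle x z)
    (e : Matrix (Fin n) (Fin n) ℝ)
    (he : e = Matrix.of fun i j => x i * x j - z i * z j) (hene : e ≠ 0)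
    (sinθ : ℝ) (hθ0 : 0 ≤ sinθ)
    (hθ : IsLeast {t : ℝ | ∃ y : EuclideanSpace ℝ (Fin n),
        t = frobNorm (Matrix.of (fun i j => x i * y j + y i * x j) - e)}
      (frobNorm e * sinθ)) :
    sinθ = Real.sin φ ^ 2 /
      Real.sqrt ((ρ ^ 2 - 1) ^ 2 + 2 * ρ ^ 2 * Real.sin φ ^ 2) :=
  stmt8_general x z hz ρ hρ φ hφ e he hene sinθ hθ
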